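/- Let s solve (γ₁/2)(τ+s)² + γ₀(τ+s) = exp(a₁(x₁−x₂))(γ₀τ + γ₁τ²/2) with −τ < s < 0, and regard s as an implicit function of γ₀ (with γ₁, a₁, τ, x₁, x₂ fixed, all parameters positive, x₁ < x₂). Then ∂s/∂γ₀ = (γ₁/2)·(τ+s)·s / (k₂(τ)·k₁(τ+s)), where k₁(t) = γ₁t + γ₀ and k₂(t) = (γ₁/2)t + γ₀. -/

import Mathlib

/-!
Write `u = τ + s`, `k₁(t) = γ₁ t + γ₀` and `k₂(t) = γ₁ t / 2 + γ₀`, so that the defining equation reads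
`u k₂(u) = E τ k₂(τ)` with `E = exp (a₁ (x₁ - x₂))`. Differentiating it in `γ₀` gives
`k₁(u) s' + u = E τ`, while the equation itself gives
`(E τ - u) k₂(τ) = u (k₂(u) - k₂(τ)) = u (γ₁ / 2) s`.
-/

open Filter Topology

theorem hasDerivAt_shift_lhs {γ₁ τ s' γ₀ : ℝ} {s : ℝ → ℝ} (hs : HasDerivAt s s' γ₀) :
    HasDerivAt (fun g => γ₁ / 2 * (τ + s g) ^ 2 + g * (τ + s g))
      ((γ₁ * (τ + s γ₀) + γ₀) * s' + (τ + s γ₀)) γ₀ := by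
  have hu : HasDerivAt (fun g => τ + s g) s' γ₀ := hs.const_add τ
  refine (((hu.pow 2).const_mul (γ₁ / 2)).add ((hasDerivAt_id γ₀).mul hu)).congr_deriv ?_
  simp only [id, Nat.cast_ofNat]
  ring

theorem stmt_9_general (γ₀ γ₁ a₁ τ x₁ x₂ : ℝ) (s : ℝ → ℝ) (s' : ℝ)
    (hγ₀ : 0 < γ₀) (hγ₁ : 0 < γ₁) (hτ : 0 < τ)
    (heq : ∀ g₀ : ℝ, 0 < g₀ →
      γ₁ / 2 * (τ + s g₀) ^ 2 + g₀ * (τ + s g₀)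
        = Real.exp (a₁ * (x₁ - x₂)) * (g₀ * τ + γ₁ * τ ^ 2 / 2))
    (hrange : ∀ g₀ : ℝ, 0 < g₀ → -τ < s g₀ ∧ s g₀ < 0)
    (hderiv : HasDerivAt s s' γ₀) :
    s' = γ₁ / 2 * (τ + s γ₀) * s γ₀
        / ((γ₁ / 2 * τ + γ₀) * (γ₁ * (τ + s γ₀) + γ₀)) := by
  set E := Real.exp (a₁ * (x₁ - x₂))
  have hu : 0 < τ + s γ₀ := by linarith [(hrange γ₀ hγ₀).1]
  have hk₂ : 0 < γ₁ / 2 * τ + γ₀ := by positivity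
  have hk₁ : 0 < γ₁ * (τ + s γ₀) + γ₀ := by positivity
  have hlocal : (fun g => γ₁ / 2 * (τ + s g) ^ 2 + g * (τ + s g))
      =ᶠ[𝓝 γ₀] fun g => E * (g * τ + γ₁ * τ ^ 2 / 2) := by
    filter_upwards [lt_mem_nhds hγ₀] with g hg using heq g hg
  have hrhs_deriv : HasDerivAt (fun g => E * (g * τ + γ₁ * τ ^ 2 / 2)) (E * τ) γ₀ := by
    simpa using (((hasDerivAt_id γ₀).mul_const τ).add_const (γ₁ * τ ^ 2 / 2)).const_mul E
  have hdiff : (γ₁ * (τ + s γ₀) + γ₀) * s' + (τ + s γ₀) = E * τ :=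
    (hlocal.hasDerivAt_iff.mp (hasDerivAt_shift_lhs hderiv)).unique hrhs_deriv
  have hrhs : (E * τ - (τ + s γ₀)) * (γ₁ / 2 * τ + γ₀) = γ₁ / 2 * (τ + s γ₀) * s γ₀ := by
    linear_combination -heq γ₀ hγ₀
  rw [eq_div_iff (by positivity)]
  linear_combination (γ₁ / 2 * τ + γ₀) * hdiff + hrhs

theorem stmt_9 (γ₀ γ₁ a₁ τ x₁ x₂ : ℝ) (s : ℝ → ℝ) (s' : ℝ)
    (hγ₀ : 0 < γ₀) (hγ₁ : 0 < γ₁) (ha₁ : 0 < a₁) (hτ : 0 < τ) (hx : x₁ < x₂)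
    (heq : ∀ g₀ : ℝ, 0 < g₀ →
      γ₁ / 2 * (τ + s g₀) ^ 2 + g₀ * (τ + s g₀)
        = Real.exp (a₁ * (x₁ - x₂)) * (g₀ * τ + γ₁ * τ ^ 2 / 2))
    (hrange : ∀ g₀ : ℝ, 0 < g₀ → -τ < s g₀ ∧ s g₀ < 0)
    (hderiv : HasDerivAt s s' γ₀) :
    s' = γ₁ / 2 * (τ + s γ₀) * s γ₀
        / ((γ₁ / 2 * τ + γ₀) * (γ₁ * (τ + s γ₀) + γ₀)) :=
  stmt_9_general γ₀ γ₁ a₁ τ x₁ x₂ s s' hγ₀ hγ₁ hτ heq hrange hderiv
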